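/- Let ε, δ ≥ 0 satisfy δ + ε ≤ 1/5. Let V, W, Ṽ, W̃ be real n×n matrices such that ‖V − Ṽ‖_∞ ≤ ε, ‖W − W̃‖_∞ ≤ ε, ‖V − I‖_∞ ≤ δ and ‖W − I‖_∞ ≤ δ. Then V, W, Ṽ, W̃ are all invertible and ‖VWV⁻¹W⁻¹ − ṼW̃Ṽ⁻¹W̃⁻¹‖_∞ ≤ 27·δ·ε + 14·ε². -/

import Mathlib

/-!
For units `v, w` of a ring, `v w v⁻¹ w⁻¹ = 1 + ⁅v, w⁆ v⁻¹ w⁻¹` with the ring commutator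
`⁅v, w⁆ = ⁅v - 1, w - 1⁆`, which is quadratically small near `1`. The difference of two group
commutators is therefore `(⁅v, w⁆ - ⁅v', w'⁆) v⁻¹ w⁻¹`, of order `δε` by bilinearity, plus
`⁅v', w'⁆ (v⁻¹ w⁻¹ - v'⁻¹ w'⁻¹)`, of order `δ'²ε`. Within distance `1/5` of `1` a matrix is
invertible, and `u⁻¹ = 1 - u⁻¹ (u - 1)` bounds the norm of its inverse by `5/4`.
-/

open Matrix
open scoped Matrix.Norms.L2Operator commutatorElement

section NormedRing

variable {R : Type*} [NormedRing R]

theorem Ring.lie_sub_one_sub_one (a b : R) : ⁅a - 1, b - 1⁆ = ⁅a, b⁆ := by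
  simp only [Ring.lie_def]
  noncomm_ring

theorem norm_lie_le (a b : R) : ‖⁅a, b⁆‖ ≤ 2 * ‖a‖ * ‖b‖ := by
  rw [Ring.lie_def]
  calc ‖a * b - b * a‖ ≤ ‖a * b‖ + ‖b * a‖ := norm_sub_le _ _
    _ ≤ ‖a‖ * ‖b‖ + ‖b‖ * ‖a‖ := add_le_add (norm_mul_le _ _) (norm_mul_le _ _)
    _ = 2 * ‖a‖ * ‖b‖ := by ring

theorem norm_lie_sub_lie_le (a b a' b' : R) :
    ‖⁅a, b⁆ - ⁅a', b'⁆‖ ≤ 2 * ‖a - a'‖ * ‖b - 1‖ + 2 * ‖a' - 1‖ * ‖b - b'‖ := by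
  have h : ⁅a, b⁆ - ⁅a', b'⁆ = ⁅a - a', b - 1⁆ + ⁅a' - 1, b - b'⁆ := by
    simp only [Ring.lie_def]
    noncomm_ring
  rw [h]
  exact (norm_add_le _ _).trans (add_le_add (norm_lie_le _ _) (norm_lie_le _ _))

theorem norm_mul_sub_mul_le (a b a' b' : R) :
    ‖a * b - a' * b'‖ ≤ ‖a - a'‖ * ‖b‖ + ‖a'‖ * ‖b - b'‖ := by
  rw [show a * b - a' * b' = (a - a') * b + a' * (b - b') by noncomm_ring]
  exact (norm_add_le _ _).trans (add_le_add (norm_mul_le _ _) (norm_mul_le _ _))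

theorem isUnit_of_norm_sub_one_lt_one [HasSummableGeomSeries R] {a : R} (h : ‖a - 1‖ < 1) :
    IsUnit a :=
  of_not_not fun ha ↦ nonunits.subset_compl_ball ha (mem_ball_iff_norm.mpr h)

namespace Units

theorem val_commutatorElement (u v : Rˣ) :
    ((⁅u, v⁆ : Rˣ) : R) = 1 + ⁅(u : R), (v : R)⁆ * (↑u⁻¹ * ↑v⁻¹) := by
  simp only [commutatorElement_def, Ring.lie_def, Units.val_mul, sub_mul, mul_assoc,
    Units.mul_inv_cancel_left, Units.mul_inv]
  abel

theorem norm_inv_le_of_norm_sub_one_le {u : Rˣ} {r : ℝ} (h : ‖(u : R) - 1‖ ≤ r) (hr : r < 1) :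
    ‖(↑u⁻¹ : R)‖ ≤ ‖(1 : R)‖ / (1 - r) := by
  have hinv : (↑u⁻¹ : R) = 1 - ↑u⁻¹ * ((u : R) - 1) := by
    rw [mul_sub, Units.inv_mul, mul_one, sub_sub_cancel]
  have hle : ‖(↑u⁻¹ : R)‖ ≤ ‖(1 : R)‖ + ‖(↑u⁻¹ : R)‖ * r :=
    calc ‖(↑u⁻¹ : R)‖ = ‖1 - ↑u⁻¹ * ((u : R) - 1)‖ := by rw [← hinv]
      _ ≤ ‖(1 : R)‖ + ‖(↑u⁻¹ : R)‖ * ‖(u : R) - 1‖ :=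
        (norm_sub_le _ _).trans (add_le_add le_rfl (norm_mul_le _ _))
      _ ≤ ‖(1 : R)‖ + ‖(↑u⁻¹ : R)‖ * r := by gcongr
  rw [le_div_iff₀ (by linarith)]
  linarith

theorem norm_inv_sub_inv_le (u v : Rˣ) :
    ‖(↑u⁻¹ : R) - ↑v⁻¹‖ ≤ ‖(↑u⁻¹ : R)‖ * ‖(v : R) - u‖ * ‖(↑v⁻¹ : R)‖ := by
  have h : (↑u⁻¹ : R) - ↑v⁻¹ = ↑u⁻¹ * ((v : R) - u) * ↑v⁻¹ := by
    rw [mul_sub, sub_mul, Units.inv_mul, one_mul, mul_assoc, Units.mul_inv, mul_one]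
  rw [h]
  exact norm_mul₃_le

theorem norm_commutatorElement_sub_le {δ δ' ε K : ℝ} {v w v' w' : Rˣ}
    (hv : ‖(v : R) - 1‖ ≤ δ) (hw : ‖(w : R) - 1‖ ≤ δ)
    (hv' : ‖(v' : R) - 1‖ ≤ δ') (hw' : ‖(w' : R) - 1‖ ≤ δ')
    (hvv' : ‖(v : R) - v'‖ ≤ ε) (hww' : ‖(w : R) - w'‖ ≤ ε)
    (hKv : ‖(↑v⁻¹ : R)‖ ≤ K) (hKw : ‖(↑w⁻¹ : R)‖ ≤ K)
    (hKv' : ‖(↑v'⁻¹ : R)‖ ≤ K) (hKw' : ‖(↑w'⁻¹ : R)‖ ≤ K) :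
    ‖((⁅v, w⁆ : Rˣ) : R) - ↑⁅v', w'⁆‖ ≤ 2 * ε * (δ + δ') * K ^ 2 + 4 * δ' ^ 2 * ε * K ^ 3 := by
  have hε : 0 ≤ ε := (norm_nonneg _).trans hvv'
  have hδ : 0 ≤ δ := (norm_nonneg _).trans hv
  have hδ' : 0 ≤ δ' := (norm_nonneg _).trans hv'
  have hK : 0 ≤ K := (norm_nonneg _).trans hKv
  have hv'v : ‖(v' : R) - v‖ ≤ ε := by rwa [norm_sub_rev]
  have hw'w : ‖(w' : R) - w‖ ≤ ε := by rwa [norm_sub_rev]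
  have hC : ‖⁅(v : R), (w : R)⁆ - ⁅(v' : R), (w' : R)⁆‖ ≤ 2 * ε * (δ + δ') :=
    calc _ ≤ 2 * ‖(v : R) - v'‖ * ‖(w : R) - 1‖ + 2 * ‖(v' : R) - 1‖ * ‖(w : R) - w'‖ :=
          norm_lie_sub_lie_le _ _ _ _
      _ ≤ 2 * ε * δ + 2 * δ' * ε := by gcongr
      _ = 2 * ε * (δ + δ') := by ring
  have hC' : ‖⁅(v' : R), (w' : R)⁆‖ ≤ 2 * δ' ^ 2 :=
    calc _ = ‖⁅(v' : R) - 1, (w' : R) - 1⁆‖ := by rw [Ring.lie_sub_one_sub_one]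
      _ ≤ 2 * ‖(v' : R) - 1‖ * ‖(w' : R) - 1‖ := norm_lie_le _ _
      _ ≤ 2 * δ' * δ' := by gcongr
      _ = 2 * δ' ^ 2 := by ring
  have hP : ‖(↑v⁻¹ : R) * ↑w⁻¹‖ ≤ K ^ 2 :=
    calc _ ≤ ‖(↑v⁻¹ : R)‖ * ‖(↑w⁻¹ : R)‖ := norm_mul_le _ _
      _ ≤ K * K := by gcongr
      _ = K ^ 2 := by ring
  have hPP' : ‖(↑v⁻¹ : R) * ↑w⁻¹ - ↑v'⁻¹ * ↑w'⁻¹‖ ≤ 2 * K ^ 3 * ε :=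
    calc _ ≤ ‖(↑v⁻¹ : R) - ↑v'⁻¹‖ * ‖(↑w⁻¹ : R)‖ + ‖(↑v'⁻¹ : R)‖ * ‖(↑w⁻¹ : R) - ↑w'⁻¹‖ :=
          norm_mul_sub_mul_le _ _ _ _
      _ ≤ (K * ε * K) * K + K * (K * ε * K) := by
          gcongr
          · exact (norm_inv_sub_inv_le v v').trans (by gcongr)
          · exact (norm_inv_sub_inv_le w w').trans (by gcongr)
      _ = 2 * K ^ 3 * ε := by ring
  rw [val_commutatorElement, val_commutatorElement, add_sub_add_left_eq_sub]
  calc _ ≤ _ := norm_mul_sub_mul_le _ _ _ _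
    _ ≤ 2 * ε * (δ + δ') * K ^ 2 + 2 * δ' ^ 2 * (2 * K ^ 3 * ε) := by gcongr
    _ = 2 * ε * (δ + δ') * K ^ 2 + 4 * δ' ^ 2 * ε * K ^ 3 := by ring

end Units

end NormedRing

theorem Matrix.l2_opNorm_one_le {𝕜 n : Type*} [RCLike 𝕜] [Fintype n] [DecidableEq n] :
    ‖(1 : Matrix n n 𝕜)‖ ≤ 1 := by
  rw [cstar_norm_def, map_one, ContinuousLinearMap.one_def]
  exact ContinuousLinearMap.norm_id_le

theorem Matrix.l2_opNorm_units_inv_le {𝕜 n : Type*} [RCLike 𝕜] [Fintype n] [DecidableEq n]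
    {u : (Matrix n n 𝕜)ˣ} {r : ℝ} (h : ‖(u : Matrix n n 𝕜) - 1‖ ≤ r) (hr : r < 1) :
    ‖(↑u⁻¹ : Matrix n n 𝕜)‖ ≤ 1 / (1 - r) :=
  (Units.norm_inv_le_of_norm_sub_one_le h hr).trans <|
    div_le_div_of_nonneg_right l2_opNorm_one_le (by linarith)

/-- **Perturbation lemma for group commutators, case `μ = 1/5`.**
If `‖V − Ṽ‖, ‖W − W̃‖ ≤ ε`, `‖V − I‖, ‖W − I‖ ≤ δ` and `δ + ε ≤ 1/5`, then all four
matrices are invertible and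
`‖[V,W] − [Ṽ,W̃]‖ ≤ 27δε + 14ε²`. -/
theorem commutator_perturbation_bound_one_fifth
    (n : ℕ) (ε δ : ℝ) (hε : 0 ≤ ε) (hδ : 0 ≤ δ) (hsum : δ + ε ≤ 1 / 5)
    (V W Vt Wt : Matrix (Fin n) (Fin n) ℝ)
    (hVVt : ‖V - Vt‖ ≤ ε) (hWWt : ‖W - Wt‖ ≤ ε)
    (hVI : ‖V - 1‖ ≤ δ) (hWI : ‖W - 1‖ ≤ δ) :
    IsUnit V ∧ IsUnit W ∧ IsUnit Vt ∧ IsUnit Wt ∧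
    ‖V * W * V⁻¹ * W⁻¹ - Vt * Wt * Vt⁻¹ * Wt⁻¹‖ ≤ 27 * δ * ε + 14 * ε ^ 2 := by
  have hVtI : ‖Vt - 1‖ ≤ δ + ε :=
    (norm_sub_le_norm_sub_add_norm_sub Vt V 1).trans (by rw [norm_sub_rev]; linarith)
  have hWtI : ‖Wt - 1‖ ≤ δ + ε :=
    (norm_sub_le_norm_sub_add_norm_sub Wt W 1).trans (by rw [norm_sub_rev]; linarith)
  obtain ⟨v, rfl⟩ := isUnit_of_norm_sub_one_lt_one (by linarith : ‖V - 1‖ < 1)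
  obtain ⟨w, rfl⟩ := isUnit_of_norm_sub_one_lt_one (by linarith : ‖W - 1‖ < 1)
  obtain ⟨v', rfl⟩ := isUnit_of_norm_sub_one_lt_one (by linarith : ‖Vt - 1‖ < 1)
  obtain ⟨w', rfl⟩ := isUnit_of_norm_sub_one_lt_one (by linarith : ‖Wt - 1‖ < 1)
  refine ⟨v.isUnit, w.isUnit, v'.isUnit, w'.isUnit, ?_⟩
  have hK : ∀ u : (Matrix (Fin n) (Fin n) ℝ)ˣ, ‖(u : Matrix (Fin n) (Fin n) ℝ) - 1‖ ≤ δ + ε →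
      ‖(↑u⁻¹ : Matrix (Fin n) (Fin n) ℝ)‖ ≤ 5 / 4 := fun u hu ↦
    (l2_opNorm_units_inv_le (hu.trans hsum) (by norm_num)).trans (by norm_num)
  have hcomm := Units.norm_commutatorElement_sub_le hVI hWI hVtI hWtI hVVt hWWt
    (hK v (by linarith)) (hK w (by linarith)) (hK v' hVtI) (hK w' hWtI)
  simp only [commutatorElement_def, Units.val_mul, Matrix.coe_units_inv] at hcomm
  refine hcomm.trans ?_
  nlinarith [mul_nonneg hδ hε, mul_nonneg (mul_nonneg hε hε) hε,
    mul_nonneg (mul_nonneg hδ hε) hε, mul_nonneg (mul_nonneg hδ hδ) hε]
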